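/- Fix a real number α > 0 and define B_n : (0,∞) → ℝ recursively by B_0(r) = -erf(√α · r)/r and B_{n+1}(r) = (1/r²)·((2n+1)·B_n(r) + (2α)^{n+1}/√(απ) · exp(-α r²)). Then for every nonnegative integer n and every r > 0, B_n is differentiable at r and dB_n/dr (r) = -r · B_{n+1}(r). -/

import Mathlib

open scoped Nat

/-- The error function `erf(x) = (2/√π) ∫₀ˣ exp(-t²) dt`. -/
noncomputable def erf (x : ℝ) : ℝ :=
  (2 / Real.sqrt Real.pi) * ∫ t in (0:ℝ)..x, Real.exp (-t ^ 2)

/-- The recursively defined functions `B_n` from the paper (depending on `α`). -/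
noncomputable def B (α : ℝ) : ℕ → ℝ → ℝ
  | 0, r => -erf (Real.sqrt α * r) / r
  | n + 1, r => (1 / r ^ 2) * ((2 * n + 1) * B α n r
      + (2 * α) ^ (n + 1) / Real.sqrt (α * Real.pi) * Real.exp (-α * r ^ 2))

/-! Write `B_{n+1} = r⁻² (k B_n + C e^{-αr²})`. If `B_n' = -r B_{n+1}`, the product rule gives
`B_{n+1}' = -r · r⁻² ((k + 2) B_{n+1} + 2αC e^{-αr²})`, which is the recurrence again with
`k + 2 = 2(n+1) + 1` and `2αC = (2α)^{n+2}/√(απ)`; so the identity propagates by induction from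
`n = 0`, where it is the chain rule for `erf(√α r)`. -/

open Real

theorem hasDerivAt_erf (x : ℝ) : HasDerivAt erf (2 / √π * exp (-x ^ 2)) x := by
  have hc : Continuous fun t : ℝ => exp (-t ^ 2) := by fun_prop
  exact (intervalIntegral.integral_hasDerivAt_right (hc.intervalIntegrable _ _)
    (hc.stronglyMeasurableAtFilter _ _) hc.continuousAt).const_mul _

theorem hasDerivAt_erf_sqrt_mul {α : ℝ} (hα : 0 ≤ α) (r : ℝ) :
    HasDerivAt (fun s => erf (√α * s)) (2 * α / √(α * π) * exp (-α * r ^ 2)) r := by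
  refine ((hasDerivAt_erf (√α * r)).comp r ((hasDerivAt_id r).const_mul √α)).congr_deriv ?_
  have hπ : √π ≠ 0 := by positivity
  rw [sqrt_mul hα, mul_pow, sq_sqrt hα]
  rcases hα.eq_or_lt with rfl | hα
  · simp
  · have : √α ≠ 0 := by positivity
    field_simp
    rw [sq_sqrt hα.le]

theorem hasDerivAt_exp_neg_mul_sq (α r : ℝ) :
    HasDerivAt (fun s => exp (-α * s ^ 2)) (-2 * α * r * exp (-α * r ^ 2)) r := by
  refine ((hasDerivAt_pow 2 r).const_mul (-α)).exp.congr_deriv ?_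
  ring

noncomputable def recurrenceStep (α k C : ℝ) (f : ℝ → ℝ) (r : ℝ) : ℝ :=
  1 / r ^ 2 * (k * f r + C * exp (-α * r ^ 2))

theorem hasDerivAt_recurrenceStep {α k C r : ℝ} {f : ℝ → ℝ} (hr : r ≠ 0)
    (hf : HasDerivAt f (-r * recurrenceStep α k C f r) r) :
    HasDerivAt (recurrenceStep α k C f)
      (-r * recurrenceStep α (k + 2) (2 * α * C) (recurrenceStep α k C f) r) r := by
  refine (((hasDerivAt_const r 1).div (hasDerivAt_pow 2 r) (pow_ne_zero 2 hr)).mul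
    ((hf.const_mul k).add ((hasDerivAt_exp_neg_mul_sq α r).const_mul C))).congr_deriv ?_
  simp only [recurrenceStep, Pi.add_apply, Pi.div_apply]
  field_simp
  ring

theorem B_succ (α : ℝ) (n : ℕ) :
    B α (n + 1) = recurrenceStep α (2 * n + 1) ((2 * α) ^ (n + 1) / √(α * π)) (B α n) := rfl

theorem hasDerivAt_B_zero {α : ℝ} (hα : 0 ≤ α) {r : ℝ} (hr : r ≠ 0) :
    HasDerivAt (B α 0) (-r * B α 1 r) r := by
  refine ((hasDerivAt_erf_sqrt_mul hα r).neg.div (hasDerivAt_id r) hr).congr_deriv ?_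
  simp only [B, Pi.neg_apply, id, Nat.cast_zero]
  field_simp
  ring

theorem B_hasDerivAt (α : ℝ) (hα : 0 < α) (n : ℕ) (r : ℝ) (hr : 0 < r) :
    HasDerivAt (B α n) (-r * B α (n + 1) r) r := by
  induction n with
  | zero => exact hasDerivAt_B_zero hα.le hr.ne'
  | succ n ih =>
    have h := hasDerivAt_recurrenceStep hr.ne' (by rwa [B_succ] at ih)
    rw [← B_succ] at h
    convert h using 3
    rw [B_succ α (n + 1)]
    simp only [recurrenceStep]
    push_cast
    ring
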